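/- Let d ≥ 2, let π, π̂ : ℝ^d_{++} → ℝ both be convex, continuous, and positively homogeneous of degree 1, and let P̄ ⊆ ℝ^d_{++} be nonempty, convex, and compact. Define Y_P̄ = {y ∈ ℝ^d : p·y ≤ π(p) for all p ∈ P̄} and Ŷ_P̄ = {y ∈ ℝ^d : p·y ≤ π̂(p) for all p ∈ P̄}. Then d_H(Y_P̄, Ŷ_P̄) = sup_{p∈P̄} |π(p) − π̂(p)| / ‖p‖. -/

import Mathlib

open scoped RealInnerProductSpace

/-- The strictly positive orthant of `ℝ^d`. -/
def posOrthant (d : ℕ) : Set (EuclideanSpace ℝ (Fin d)) := {p | ∀ i, 0 < p i}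

open Metric Set

/-!
A subgradient of a convex, continuous, positively homogeneous `f` at `q ∈ P̄` (a hyperplane
supporting its strict epigraph) is linear by homogeneity, so it is a point `z` of the
production set with `⟪q, z⟫ = f q`. Such a `z` is at distance at least `(f q - g q) / ‖q‖`
from the other production set, which gives the lower bound. For the upper bound, project a point
`y` onto the other production set; the normal `y - z` lies in the cone generated by `P̄`
(closed because `P̄` is compact and avoids `0`, so Farkas' lemma applies), say `y - z = t • q`,
and then `‖y - z‖² ≤ t (⟪q, y⟫ - g q) ≤ ε ‖y - z‖` with `ε` the supremum.
-/

lemma hausdorffEDist_ne_top_of_forall_dist_le {X : Type*} [PseudoMetricSpace X] {s t : Set X}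
    {r : ℝ} (hr : 0 ≤ r) (H1 : ∀ x ∈ s, ∃ y ∈ t, dist x y ≤ r)
    (H2 : ∀ x ∈ t, ∃ y ∈ s, dist x y ≤ r) : hausdorffEDist s t ≠ ⊤ :=
  ne_top_of_le_ne_top ENNReal.ofReal_ne_top <| hausdorffEDist_le_of_mem_edist
    (fun x hx => let ⟨y, hy, hxy⟩ := H1 x hx; ⟨y, hy, (edist_le_ofReal hr).2 hxy⟩)
    (fun x hx => let ⟨y, hy, hxy⟩ := H2 x hx; ⟨y, hy, (edist_le_ofReal hr).2 hxy⟩)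

section Rays

variable {E : Type*} [NormedAddCommGroup E] [NormedSpace ℝ E] {P : Set E} {x : E}

def rays (P : Set E) : Set E := {x | ∃ t : ℝ, 0 ≤ t ∧ ∃ p ∈ P, t • p = x}

lemma smul_mem_rays (hx : x ∈ rays P) {s : ℝ} (hs : 0 ≤ s) : s • x ∈ rays P := by
  obtain ⟨t, ht, p, hp, rfl⟩ := hx
  exact ⟨s * t, mul_nonneg hs ht, p, hp, mul_smul s t p⟩

lemma zero_mem_rays (hP : P.Nonempty) : (0 : E) ∈ rays P :=
  let ⟨p, hp⟩ := hP
  ⟨0, le_rfl, p, hp, zero_smul ℝ p⟩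

lemma add_mem_rays (hPne : P.Nonempty) (hPconv : Convex ℝ P) {x y : E} (hx : x ∈ rays P)
    (hy : y ∈ rays P) : x + y ∈ rays P := by
  obtain ⟨s, hs, p, hp, rfl⟩ := hx
  obtain ⟨t, ht, q, hq, rfl⟩ := hy
  rcases (add_nonneg hs ht).eq_or_lt with hst | hst
  · obtain ⟨rfl, rfl⟩ : s = 0 ∧ t = 0 := by constructor <;> linarith
    simpa using zero_mem_rays hPne
  · -- `s • p + t • q` is `s + t` times a convex combination of `p` and `q`
    refine ⟨s + t, hst.le, _, convex_iff_div.1 hPconv hp hq hs ht hst, ?_⟩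
    rw [smul_add, smul_smul, smul_smul, mul_div_cancel₀ _ hst.ne', mul_div_cancel₀ _ hst.ne']

lemma convex_rays (hPne : P.Nonempty) (hPconv : Convex ℝ P) : Convex ℝ (rays P) :=
  fun _ hx _ hy _ _ ha hb _ =>
    add_mem_rays hPne hPconv (smul_mem_rays hx ha) (smul_mem_rays hy hb)

lemma isClosed_rays (hPc : IsCompact P) (h0 : (0 : E) ∉ P) : IsClosed (rays P) := by
  rcases P.eq_empty_or_nonempty with rfl | hPne
  · simp [rays]
  obtain ⟨p₀, hp₀, hmin⟩ := hPc.exists_isMinOn hPne continuous_norm.continuousOn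
  have hm : 0 < ‖p₀‖ := norm_pos_iff.2 (ne_of_mem_of_not_mem hp₀ h0)
  refine isClosed_of_closure_subset fun x hx => ?_
  set R := ‖x‖ + 1
  -- near `x`, the rays are cut off at a bounded parameter, which leaves a compact set
  set K := (fun a : ℝ × E => a.1 • a.2) '' (Icc 0 (R / ‖p₀‖) ×ˢ P)
  have hK : IsCompact K := (isCompact_Icc.prod hPc).image continuous_smul
  have hball : ball 0 R ∩ rays P ⊆ K := by
    rintro _ ⟨hlt, t, ht, p, hp, rfl⟩
    refine ⟨(t, p), ⟨⟨ht, ?_⟩, hp⟩, rfl⟩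
    rw [mem_ball_zero_iff, norm_smul, Real.norm_of_nonneg ht] at hlt
    have hp₀p : ‖p₀‖ ≤ ‖p‖ := hmin hp
    show t ≤ R / ‖p₀‖
    rw [le_div_iff₀ hm]
    exact (mul_le_mul_of_nonneg_left hp₀p ht).trans hlt.le
  have hKrays : K ⊆ rays P := by
    rintro _ ⟨⟨t, p⟩, ⟨⟨ht, -⟩, hp⟩, rfl⟩
    exact ⟨t, ht, p, hp, rfl⟩
  have hxK : x ∈ closure (ball 0 R ∩ rays P) :=
    isOpen_ball.inter_closure ⟨mem_ball_zero_iff.2 (by linarith), hx⟩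
  exact hKrays (hK.isClosed.closure_subset (closure_mono hball hxK))

end Rays

section InnerProductSpace

variable {E : Type*} [NormedAddCommGroup E] [InnerProductSpace ℝ E] [CompleteSpace E]

lemma mem_rays_of_inner_nonpos {P : Set E} (hPne : P.Nonempty) (hPconv : Convex ℝ P)
    (hPc : IsCompact P) (h0 : (0 : E) ∉ P) {v : E}
    (hv : ∀ w, (∀ p ∈ P, ⟪p, w⟫ ≤ 0) → ⟪v, w⟫ ≤ 0) : v ∈ rays P := by
  by_contra hvP
  obtain ⟨L, u, hLu, huv⟩ :=
    geometric_hahn_banach_closed_point (convex_rays hPne hPconv) (isClosed_rays hPc h0) hvP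
  have hu : 0 < u := by simpa using hLu 0 (zero_mem_rays hPne)
  have hL : ∀ x ∈ rays P, L x ≤ 0 := by
    intro x hx
    by_contra! hLx
    have := hLu ((u / L x) • x) (smul_mem_rays hx (by positivity))
    rw [map_smul, smul_eq_mul, div_mul_cancel₀ _ hLx.ne'] at this
    exact lt_irrefl u this
  set w := (InnerProductSpace.toDual ℝ E).symm L
  have hw : ∀ x, ⟪x, w⟫ = L x := fun x => by
    rw [real_inner_comm]; exact InnerProductSpace.toDual_symm_apply
  have := hv w fun p hp => (hw p).trans_le (hL p ⟨1, zero_le_one, p, hp, one_smul ℝ p⟩)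
  rw [hw] at this
  linarith

lemma ConvexOn.exists_add_inner_sub_le {K : Set E} {f : E → ℝ} (hf : ConvexOn ℝ K f)
    (hK : IsOpen K) (hfc : ContinuousOn f K) {q : E} (hq : q ∈ K) :
    ∃ z, ∀ p ∈ K, f q + ⟪p - q, z⟫ ≤ f p := by
  set A : Set (E × ℝ) := {a | a.1 ∈ K ∧ f a.1 < a.2}
  have hA : IsOpen A := by
    have : A = (K ×ˢ univ) ∩ (fun a : E × ℝ => a.2 - f a.1) ⁻¹' Ioi 0 := by
      ext a; simp [A, sub_pos]
    rw [this]
    exact (continuousOn_snd.sub (hfc.comp continuousOn_fst fun a ha => ha.1))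
      |>.isOpen_inter_preimage (hK.prod isOpen_univ) isOpen_Ioi
  obtain ⟨L, hL⟩ := geometric_hahn_banach_open_point hf.convex_strict_epigraph hA
    (fun h => lt_irrefl _ h.2 : (q, f q) ∉ A)
  set c := L (0, 1)
  have hLsplit : ∀ p t, L (p, t) = L (p, 0) + t * c := fun p t => by
    rw [← smul_eq_mul, ← map_smul, ← map_add]; simp
  have hc : c < 0 := by
    have := hL (q, f q + 1) ⟨hq, by linarith⟩
    rw [hLsplit q (f q + 1), hLsplit q (f q)] at this
    linarith
  set ψ : StrongDual ℝ E := (-c)⁻¹ • L.comp (.inl ℝ E ℝ)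
  have hψ : ∀ p ∈ K, ∀ t, f p < t → ψ p - t < ψ q - f q := by
    intro p hp t ht
    have := mul_lt_mul_of_pos_left (hL (p, t) ⟨hp, ht⟩) (inv_pos.2 (neg_pos.2 hc))
    have hκ : (-c)⁻¹ * c = -1 := by rw [inv_neg, neg_mul, inv_mul_cancel₀ hc.ne]
    rw [hLsplit, hLsplit q] at this
    change (-c)⁻¹ * L (p, 0) - t < (-c)⁻¹ * L (q, 0) - f q
    linear_combination this + (f q - t) * hκ
  refine ⟨(InnerProductSpace.toDual ℝ E).symm ψ, fun p hp => ?_⟩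
  rw [real_inner_comm, InnerProductSpace.toDual_symm_apply, map_sub]
  have : ψ p - f p ≤ ψ q - f q :=
    le_of_forall_pos_lt_add fun ε hε => by linarith [hψ p hp (f p + ε) (by linarith)]
  linarith

lemma ConvexOn.exists_inner_le_and_inner_eq {K : Set E} {f : E → ℝ} (hf : ConvexOn ℝ K f)
    (hK : IsOpen K) (hKsmul : ∀ p ∈ K, ∀ l : ℝ, 0 < l → l • p ∈ K)
    (hfc : ContinuousOn f K) (hhom : ∀ p ∈ K, ∀ l : ℝ, 0 < l → f (l • p) = l * f p)
    {q : E} (hq : q ∈ K) : ∃ z, (∀ p ∈ K, ⟪p, z⟫ ≤ f p) ∧ ⟪q, z⟫ = f q := by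
  obtain ⟨z, hz⟩ := hf.exists_add_inner_sub_le hK hfc hq
  -- along the ray through `q` both sides of the subgradient inequality are linear in the scale
  have hscale : ∀ l : ℝ, 0 < l → (l - 1) * ⟪q, z⟫ ≤ (l - 1) * f q := fun l hl => by
    have := hz (l • q) (hKsmul q hq l hl)
    rw [hhom q hq l hl, inner_sub_left, real_inner_smul_left] at this
    linarith
  have hqz : ⟪q, z⟫ = f q := by
    linarith [hscale 2 two_pos, hscale 2⁻¹ (by norm_num)]
  refine ⟨z, fun p hp => ?_, hqz⟩
  have := hz p hp
  rw [inner_sub_left, hqz] at this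
  linarith

end InnerProductSpace

section ProductionSet

variable {E : Type*} [NormedAddCommGroup E] [InnerProductSpace ℝ E] {P : Set E} {f g : E → ℝ}

def productionSet (P : Set E) (f : E → ℝ) : Set E := {y | ∀ p ∈ P, ⟪p, y⟫ ≤ f p}

/-- `f` agrees on `P` with the support function of `productionSet P f`. -/
def IsSupportFunctionOn (P : Set E) (f : E → ℝ) : Prop :=
  ∀ q ∈ P, ∃ z ∈ productionSet P f, ⟪q, z⟫ = f q

lemma isClosed_productionSet (P : Set E) (f : E → ℝ) : IsClosed (productionSet P f) := by
  simp only [productionSet, ofPred_forall]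
  exact isClosed_biInter fun p _ =>
    isClosed_le (continuous_const.inner continuous_id) continuous_const

lemma convex_productionSet (P : Set E) (f : E → ℝ) : Convex ℝ (productionSet P f) := by
  simp only [productionSet, ofPred_forall]
  exact convex_iInter₂ fun p _ => convex_halfSpace_le (innerₛₗ ℝ p).isLinear (f p)

lemma IsSupportFunctionOn.nonempty (hf : IsSupportFunctionOn P f) (hP : P.Nonempty) :
    (productionSet P f).Nonempty := by
  obtain ⟨q, hq⟩ := hP
  obtain ⟨z, hz, -⟩ := hf q hq
  exact ⟨z, hz⟩

lemma ConvexOn.isSupportFunctionOn [CompleteSpace E] {K : Set E} (hf : ConvexOn ℝ K f)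
    (hK : IsOpen K) (hKsmul : ∀ p ∈ K, ∀ l : ℝ, 0 < l → l • p ∈ K)
    (hfc : ContinuousOn f K) (hhom : ∀ p ∈ K, ∀ l : ℝ, 0 < l → f (l • p) = l * f p)
    (hPK : P ⊆ K) : IsSupportFunctionOn P f := by
  intro q hq
  obtain ⟨z, hzK, hqz⟩ := hf.exists_inner_le_and_inner_eq hK hKsmul hfc hhom (hPK hq)
  exact ⟨z, fun p hp => hzK p (hPK hp), hqz⟩

lemma exists_mem_productionSet_dist_le [CompleteSpace E] (hPne : P.Nonempty)
    (hPconv : Convex ℝ P) (hPc : IsCompact P) (h0 : (0 : E) ∉ P) (hg : IsSupportFunctionOn P g)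
    {ε : ℝ} (hε : 0 ≤ ε) {y : E} (hy : ∀ p ∈ P, ⟪p, y⟫ ≤ g p + ε * ‖p‖) :
    ∃ z ∈ productionSet P g, dist y z ≤ ε := by
  obtain ⟨z, hz, hmin⟩ := exists_norm_eq_iInf_of_complete_convex (hg.nonempty hPne)
    (isClosed_productionSet P g).isComplete (convex_productionSet P g) y
  have hnormal : ∀ w ∈ productionSet P g, ⟪y - z, w - z⟫ ≤ 0 :=
    (norm_eq_iInf_iff_real_inner_le_zero (convex_productionSet P g) hz).1 hmin
  -- `z + w` stays in the set whenever `w` is nonpositive on `P`, so by Farkas' lemma the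
  -- normal `y - z` lies on a ray through `P`
  obtain ⟨t, ht, q, hq, hyz⟩ : y - z ∈ rays P :=
    mem_rays_of_inner_nonpos hPne hPconv hPc h0 fun w hw => by
      simpa using hnormal (z + w) fun p hp => by
        rw [inner_add_right]; linarith [hz p hp, hw p hp]
  obtain ⟨zq, hzq, hqzq⟩ := hg q hq
  have key : ‖y - z‖ ^ 2 ≤ ε * ‖y - z‖ := calc
    ‖y - z‖ ^ 2 = ⟪y - z, y⟫ - ⟪y - z, z⟫ := by
      rw [← real_inner_self_eq_norm_sq, inner_sub_right]
    _ ≤ ⟪y - z, y⟫ - ⟪y - z, zq⟫ := by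
      linarith [hnormal zq hzq, inner_sub_right (𝕜 := ℝ) (y - z) zq z]
    _ = t * (⟪q, y⟫ - g q) := by
      rw [← hyz, real_inner_smul_left, real_inner_smul_left, hqzq]; ring
    _ ≤ t * (ε * ‖q‖) := mul_le_mul_of_nonneg_left (by linarith [hy q hq]) ht
    _ = ε * ‖y - z‖ := by rw [← hyz, norm_smul, Real.norm_of_nonneg ht]; ring
  refine ⟨z, hz, ?_⟩
  rw [dist_eq_norm]
  nlinarith [norm_nonneg (y - z)]

lemma IsSupportFunctionOn.sub_div_norm_le_hausdorffDist (hf : IsSupportFunctionOn P f)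
    (hg : (productionSet P g).Nonempty)
    (hfin : hausdorffEDist (productionSet P f) (productionSet P g) ≠ ⊤) {q : E} (hq : q ∈ P) :
    (f q - g q) / ‖q‖ ≤ hausdorffDist (productionSet P f) (productionSet P g) := by
  obtain ⟨z, hz, hqz⟩ := hf q hq
  refine ((le_infDist hg).2 fun w hw => ?_).trans (infDist_le_hausdorffDist_of_mem hz hfin)
  refine div_le_of_le_mul₀ (norm_nonneg q) dist_nonneg ?_
  calc f q - g q ≤ ⟪q, z - w⟫ := by rw [inner_sub_right, hqz]; linarith [hw q hq]
    _ ≤ ‖q‖ * ‖z - w‖ := real_inner_le_norm q (z - w)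
    _ = dist z w * ‖q‖ := by rw [dist_eq_norm, mul_comm]

theorem hausdorffDist_productionSet_eq_sSup [CompleteSpace E] (hPne : P.Nonempty)
    (hPconv : Convex ℝ P) (hPc : IsCompact P) (h0 : (0 : E) ∉ P) (hfc : ContinuousOn f P)
    (hgc : ContinuousOn g P) (hf : IsSupportFunctionOn P f) (hg : IsSupportFunctionOn P g) :
    hausdorffDist (productionSet P f) (productionSet P g)
      = sSup ((fun p => |f p - g p| / ‖p‖) '' P) := by
  set ε := sSup ((fun p => |f p - g p| / ‖p‖) '' P)
  have hnorm : ∀ p ∈ P, 0 < ‖p‖ := fun p hp => norm_pos_iff.2 (ne_of_mem_of_not_mem hp h0)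
  have hbdd : BddAbove ((fun p => |f p - g p| / ‖p‖) '' P) :=
    hPc.bddAbove_image <| (hfc.sub hgc).abs.div continuous_norm.continuousOn
      fun p hp => (hnorm p hp).ne'
  have hle : ∀ p ∈ P, |f p - g p| ≤ ε * ‖p‖ := fun p hp =>
    (div_le_iff₀ (hnorm p hp)).1 (le_csSup hbdd (mem_image_of_mem _ hp))
  have hε : 0 ≤ ε := by
    obtain ⟨p, hp⟩ := hPne
    exact nonneg_of_mul_nonneg_left ((abs_nonneg _).trans (hle p hp)) (hnorm p hp)
  have hfg : ∀ y ∈ productionSet P f, ∃ z ∈ productionSet P g, dist y z ≤ ε := fun y hy =>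
    exists_mem_productionSet_dist_le hPne hPconv hPc h0 hg hε fun p hp => by
      linarith [hy p hp, le_abs_self (f p - g p), hle p hp]
  have hgf : ∀ y ∈ productionSet P g, ∃ z ∈ productionSet P f, dist y z ≤ ε := fun y hy =>
    exists_mem_productionSet_dist_le hPne hPconv hPc h0 hf hε fun p hp => by
      linarith [hy p hp, neg_abs_le (f p - g p), hle p hp]
  have hfin := hausdorffEDist_ne_top_of_forall_dist_le hε hfg hgf
  refine le_antisymm (hausdorffDist_le_of_mem_dist hε hfg hgf)
    (csSup_le (hPne.image _) (forall_mem_image.2 fun q hq => ?_))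
  have h₁ := hf.sub_div_norm_le_hausdorffDist (hg.nonempty hPne) hfin hq
  have h₂ := hg.sub_div_norm_le_hausdorffDist (hf.nonempty hPne)
    (hausdorffEDist_comm.trans_ne hfin) hq
  rw [hausdorffDist_comm] at h₂
  rw [← abs_norm q, ← abs_div, abs_le, neg_le, ← neg_div, neg_sub]
  exact ⟨h₂, h₁⟩

lemma isOpen_posOrthant (d : ℕ) : IsOpen (posOrthant d) := by
  simp only [posOrthant, ofPred_forall]
  exact isOpen_iInter_of_finite fun i => isOpen_lt continuous_const (by fun_prop)

lemma smul_mem_posOrthant {d : ℕ} {p : EuclideanSpace ℝ (Fin d)} (hp : p ∈ posOrthant d)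
    {l : ℝ} (hl : 0 < l) : l • p ∈ posOrthant d :=
  fun i => mul_pos hl (hp i)

lemma zero_notMem_posOrthant {d : ℕ} (hd : d ≠ 0) :
    (0 : EuclideanSpace ℝ (Fin d)) ∉ posOrthant d :=
  fun h => lt_irrefl 0 (h ⟨0, Nat.pos_of_ne_zero hd⟩)

/-- Deterministic content of Theorem 7.1: the Hausdorff distance between the
production sets induced by two convex, continuous, positively homogeneous degree-1
profit functions over a nonempty convex compact price set `P̄ ⊆ ℝ^d_{++}` equals the
sup of `|π(p) − π̂(p)|/‖p‖` over `P̄`. -/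
theorem stmt6 (d : ℕ) (hd : 2 ≤ d)
    (prof profhat : EuclideanSpace ℝ (Fin d) → ℝ)
    (hconv : ConvexOn ℝ (posOrthant d) prof)
    (hhatconv : ConvexOn ℝ (posOrthant d) profhat)
    (hcont : ContinuousOn prof (posOrthant d))
    (hhatcont : ContinuousOn profhat (posOrthant d))
    (hhom : ∀ p ∈ posOrthant d, ∀ l : ℝ, 0 < l → prof (l • p) = l * prof p)
    (hhathom : ∀ p ∈ posOrthant d, ∀ l : ℝ, 0 < l → profhat (l • p) = l * profhat p)
    (Pb : Set (EuclideanSpace ℝ (Fin d))) (hPbne : Pb.Nonempty)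
    (hPbconv : Convex ℝ Pb) (hPbcomp : IsCompact Pb) (hPbpos : Pb ⊆ posOrthant d) :
    Metric.hausdorffDist
        {y : EuclideanSpace ℝ (Fin d) | ∀ p ∈ Pb, ⟪p, y⟫ ≤ prof p}
        {y : EuclideanSpace ℝ (Fin d) | ∀ p ∈ Pb, ⟪p, y⟫ ≤ profhat p}
      = sSup ((fun p => |prof p - profhat p| / ‖p‖) '' Pb) := by
  have hsmul : ∀ p ∈ posOrthant d, ∀ l : ℝ, 0 < l → l • p ∈ posOrthant d :=
    fun _ hp _ hl => smul_mem_posOrthant hp hl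
  exact hausdorffDist_productionSet_eq_sSup hPbne hPbconv hPbcomp
    (fun h => zero_notMem_posOrthant (by omega) (hPbpos h))
    (hcont.mono hPbpos) (hhatcont.mono hPbpos)
    (hconv.isSupportFunctionOn (isOpen_posOrthant d) hsmul hcont hhom hPbpos)
    (hhatconv.isSupportFunctionOn (isOpen_posOrthant d) hsmul hhatcont hhathom hPbpos)
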